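/- arXiv:2305.04999 — 5 statements merged into one kernel-verified Lean document; each statement's English description precedes it below -/
import Mathlib

section
/- Let f be a proper lower semicontinuous convex function on a real Hilbert space H and let C = {(x,η) ∈ H × ℝ : η + f*(x) ≤ 0}. Then the Fenchel conjugate of the perspective 𝑓̃ of f is the indicator function of C, i.e., (𝑓̃)* = ι_C. -/
open scoped RealInnerProductSpace
open Filter Topology

/-- Fenchel conjugate of `f` on a real inner product space. -/
noncomputable def fenchel {H : Type*} [NormedAddCommGroup H] [InnerProductSpace ℝ H]
    (f : H → EReal) (u : H) : EReal :=
  ⨆ x : H, ((⟪x, u⟫ : ℝ) : EReal) - f x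

/-- Epigraph of an `EReal`-valued function. -/
def epi {E : Type*} (f : E → EReal) : Set (E × ℝ) := {p | f p.1 ≤ (p.2 : EReal)}

/-- `f` is proper, lower semicontinuous and convex. -/
def ProperLscConvex {E : Type*} [AddCommGroup E] [Module ℝ E] [TopologicalSpace E]
    (f : E → EReal) : Prop :=
  (∀ x, f x ≠ ⊥) ∧ (∃ x, f x ≠ ⊤) ∧ LowerSemicontinuous f ∧ Convex ℝ (epi f)

/-- Effective domain. -/
def edom {E : Type*} (f : E → EReal) : Set E := {x | f x ≠ ⊤}

/-- Recession function of a proper lsc convex function: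
`rec f x = sup_{y ∈ dom f} (f (y + x) - f y)`. -/
noncomputable def recFn {E : Type*} [AddCommGroup E] (f : E → EReal) (x : E) : EReal :=
  ⨆ (y : E) (_ : f y ≠ ⊤), f (y + x) - f y

/-- Perspective of `f`. -/
noncomputable def persp {E : Type*} [AddCommGroup E] [Module ℝ E] (f : E → EReal) :
    E × ℝ → EReal := fun p =>
  if 0 < p.2 then (p.2 : EReal) * f (p.2⁻¹ • p.1)
  else if p.2 = 0 then recFn f p.1
  else ⊤

/-- `p` is the proximal point `prox_{γ f} x`, i.e. the minimizer of
`γ f(y) + ½‖x - y‖²`. -/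
def IsProx {H : Type*} [NormedAddCommGroup H] (f : H → EReal) (γ : ℝ) (x p : H) : Prop :=
  ∀ y : H, (γ : EReal) * f p + ((‖x - p‖ ^ 2 / 2 : ℝ) : EReal)
    ≤ (γ : EReal) * f y + ((‖x - y‖ ^ 2 / 2 : ℝ) : EReal)

/-- `p` is the metric projection of `x` onto `C`. -/
def IsProj {H : Type*} [NormedAddCommGroup H] (C : Set H) (x p : H) : Prop :=
  p ∈ C ∧ ∀ y ∈ C, ‖x - p‖ ≤ ‖x - y‖

/-- Proximity operator on `H ⊕ ℝ` (with the Hilbert direct-sum norm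
`‖(x,η)‖² = ‖x‖² + η²`). -/
def IsProx2 {H : Type*} [NormedAddCommGroup H] (F : H × ℝ → EReal) (γ : ℝ)
    (x : H) (η : ℝ) (p : H) (μ : ℝ) : Prop :=
  ∀ (y : H) (ν : ℝ),
    (γ : EReal) * F (p, μ) + (((‖x - p‖ ^ 2 + (η - μ) ^ 2) / 2 : ℝ) : EReal)
      ≤ (γ : EReal) * F (y, ν) + (((‖x - y‖ ^ 2 + (η - ν) ^ 2) / 2 : ℝ) : EReal)

/-- Fenchel conjugate on `H ⊕ ℝ` with `⟪(x,η),(u,χ)⟫ = ⟪x,u⟫ + ηχ`. -/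
noncomputable def fenchel2 {H : Type*} [NormedAddCommGroup H] [InnerProductSpace ℝ H]
    (F : H × ℝ → EReal) (u : H) (χ : ℝ) : EReal :=
  ⨆ p : H × ℝ, ((⟪p.1, u⟫ + p.2 * χ : ℝ) : EReal) - F p

/-- Support function of a set. -/
noncomputable def suppFn {H : Type*} [NormedAddCommGroup H] [InnerProductSpace ℝ H]
    (C : Set H) (u : H) : EReal :=
  ⨆ x ∈ C, ((⟪x, u⟫ : ℝ) : EReal)

/-!
If `χ + f*(u) ≤ 0`, the affine function `z ↦ ⟪z, u⟫ + χ` minorizes `f`. Scaling it bounds every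
term `⟪x, u⟫ + ηχ - f̃(x, η)` of the supremum by `0` when `η > 0`; when `η = 0` the finiteness of
`f*(u)` gives `⟪x, u⟫ ≤ (rec f)(x)`; and the term at `(0, 0)` is `0`. Otherwise some `z` has
`f z < ⟪z, u⟫ + χ`, and along the ray `t • (z, 1)` the terms equal `t (⟪z, u⟫ + χ - f z) → ∞`.
-/

lemma EReal.coe_add_nonpos_iff {a : ℝ} {x : EReal} :
    (a : EReal) + x ≤ 0 ↔ x ≤ ((-a : ℝ) : EReal) := by
  induction x <;> norm_cast <;> simp [le_neg_iff_add_nonpos_left]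

lemma EReal.coe_sub_le_coe_iff {a b : ℝ} {x : EReal} :
    (a : EReal) - x ≤ b ↔ ((a - b : ℝ) : EReal) ≤ x := by
  induction x with
  | bot => simp [-EReal.coe_sub]
  | coe x => norm_cast; simp [add_comm]
  | top => simp

lemma EReal.coe_sub_ne_bot {a : ℝ} {x : EReal} (hx : x ≠ ⊤) : (a : EReal) - x ≠ ⊥ := by
  induction x <;> simp_all [← EReal.coe_sub]

section recFn

variable {E : Type*} [AddCommGroup E] {f : E → EReal}

theorem sub_le_recFn {x y : E} (hy : f y ≠ ⊤) : f (y + x) - f y ≤ recFn f x :=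
  le_iSup₂ (f := fun y (_ : f y ≠ ⊤) => f (y + x) - f y) y hy

theorem recFn_zero (hbot : ∀ x, f x ≠ ⊥) (hdom : ∃ x, f x ≠ ⊤) : recFn f 0 = 0 := by
  have hself : ∀ y, f y ≠ ⊤ → f (y + 0) - f y = 0 := fun y hy => by
    rw [add_zero, EReal.sub_self hy (hbot y)]
  obtain ⟨x, hx⟩ := hdom
  exact le_antisymm (iSup₂_le fun y hy => (hself y hy).le) (hself x hx ▸ sub_le_recFn hx)

end recFn

section persp

variable {E : Type*} [AddCommGroup E] [Module ℝ E] {f : E → EReal}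

theorem persp_of_pos {x : E} {η : ℝ} (hη : 0 < η) : persp f (x, η) = η * f (η⁻¹ • x) :=
  if_pos hη

theorem persp_zero_right (x : E) : persp f (x, 0) = recFn f x := by
  simp [persp]

theorem persp_of_neg {x : E} {η : ℝ} (hη : η < 0) : persp f (x, η) = ⊤ := by
  simp [persp, hη.ne, hη.not_gt]

theorem persp_smul_self {z : E} {t : ℝ} (ht : 0 < t) : persp f (t • z, t) = t * f z := by
  rw [persp_of_pos ht, inv_smul_smul₀ ht.ne']

end persp

section fenchel

variable {H : Type*} [NormedAddCommGroup H] [InnerProductSpace ℝ H] {f : H → EReal}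

theorem inner_sub_le_fenchel (u z : H) : ((⟪z, u⟫ : ℝ) : EReal) - f z ≤ fenchel f u :=
  le_iSup (fun z => ((⟪z, u⟫ : ℝ) : EReal) - f z) z

theorem fenchel_le_coe_iff {u : H} {s : ℝ} :
    fenchel f u ≤ s ↔ ∀ z, ((⟪z, u⟫ - s : ℝ) : EReal) ≤ f z :=
  iSup_le_iff.trans (forall_congr' fun _ => EReal.coe_sub_le_coe_iff)

theorem fenchel_ne_bot (hdom : ∃ x, f x ≠ ⊤) (u : H) : fenchel f u ≠ ⊥ := by
  obtain ⟨x, hx⟩ := hdom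
  exact ne_bot_of_le_ne_bot (EReal.coe_sub_ne_bot hx) (inner_sub_le_fenchel u x)

theorem inner_le_recFn (hbot : ∀ x, f x ≠ ⊥) (hdom : ∃ x, f x ≠ ⊤) {u : H}
    (hu : fenchel f u ≠ ⊤) (x : H) : ((⟪x, u⟫ : ℝ) : EReal) ≤ recFn f x := by
  lift fenchel f u to ℝ using ⟨hu, fenchel_ne_bot hdom u⟩ with s hs
  -- `rec f (x) < t < ⟪x, u⟫` would give `f (y + x) ≤ f y + t` on `dom f`,
  -- lowering `f*(u)` by `⟪x, u⟫ - t`.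
  by_contra! hlt
  obtain ⟨t, hrec, ht⟩ := EReal.exists_between_coe_real hlt
  have hle : fenchel f u ≤ ((s + (t - ⟪x, u⟫) : ℝ) : EReal) := by
    refine fenchel_le_coe_iff.2 fun y => ?_
    rcases eq_or_ne (f y) ⊤ with hy | hy
    · simp [hy]
    have hyx := (sub_le_recFn (x := x) hy).trans_lt hrec
    lift f y to ℝ using ⟨hy, hbot y⟩ with b
    rw [EReal.sub_lt_iff (.inl (EReal.coe_ne_bot b)) (.inl (EReal.coe_ne_top b))] at hyx
    have key : ((⟪y + x, u⟫ - s : ℝ) : EReal) < (t + b : ℝ) :=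
      (fenchel_le_coe_iff.1 hs.ge _).trans_lt (by exact_mod_cast hyx)
    rw [inner_add_left, EReal.coe_lt_coe_iff] at key
    exact EReal.coe_le_coe_iff.2 (by linarith)
  rw [← hs, EReal.coe_le_coe_iff] at hle
  exact (EReal.coe_lt_coe_iff.1 ht).not_ge (by linarith)

theorem coe_inner_add_mul_le_persp (hbot : ∀ x, f x ≠ ⊥) (hdom : ∃ x, f x ≠ ⊤)
    {u : H} {χ : ℝ} (h : fenchel f u ≤ ((-χ : ℝ) : EReal)) (x : H) (η : ℝ) :
    ((⟪x, u⟫ + η * χ : ℝ) : EReal) ≤ persp f (x, η) := by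
  rcases lt_trichotomy η 0 with hη | rfl | hη
  · rw [persp_of_neg hη]
    exact le_top
  · rw [persp_zero_right, zero_mul, add_zero]
    exact inner_le_recFn hbot hdom (ne_top_of_le_ne_top (EReal.coe_ne_top _) h) x
  · rw [persp_of_pos hη]
    calc ((⟪x, u⟫ + η * χ : ℝ) : EReal) = η * ((⟪η⁻¹ • x, u⟫ - -χ : ℝ) : EReal) := by
          rw [← EReal.coe_mul, real_inner_smul_left, mul_sub, mul_inv_cancel_left₀ hη.ne']
          ring_nf
      _ ≤ η * f (η⁻¹ • x) :=
          mul_le_mul_of_nonneg_left (fenchel_le_coe_iff.1 h _) (EReal.coe_nonneg.2 hη.le)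

theorem inner_add_mul_sub_le_fenchel2 (F : H × ℝ → EReal) (u : H) (χ : ℝ) (p : H × ℝ) :
    ((⟪p.1, u⟫ + p.2 * χ : ℝ) : EReal) - F p ≤ fenchel2 F u χ :=
  le_iSup (fun p : H × ℝ => ((⟪p.1, u⟫ + p.2 * χ : ℝ) : EReal) - F p) p

theorem fenchel2_persp_eq_zero_of_fenchel_le (hbot : ∀ x, f x ≠ ⊥) (hdom : ∃ x, f x ≠ ⊤)
    {u : H} {χ : ℝ} (h : fenchel f u ≤ ((-χ : ℝ) : EReal)) : fenchel2 (persp f) u χ = 0 := by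
  refine le_antisymm (iSup_le fun p => ?_) ?_
  · exact EReal.sub_nonpos.2 (coe_inner_add_mul_le_persp hbot hdom h p.1 p.2)
  · simpa [persp_zero_right, recFn_zero hbot hdom] using
      inner_add_mul_sub_le_fenchel2 (persp f) u χ (0, 0)

theorem fenchel2_persp_eq_top_of_lt_fenchel (hbot : ∀ x, f x ≠ ⊥) {u : H} {χ : ℝ}
    (h : ((-χ : ℝ) : EReal) < fenchel f u) : fenchel2 (persp f) u χ = ⊤ := by
  rw [← not_le, fenchel_le_coe_iff] at h
  push Not at h
  obtain ⟨z, hz⟩ := h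
  lift f z to ℝ using ⟨hz.ne_top, hbot z⟩ with r hr
  have hδ : 0 < ⟪z, u⟫ + χ - r := by
    rw [EReal.coe_lt_coe_iff] at hz
    linarith
  refine (EReal.eq_top_iff_forall_lt _).2 fun c => ?_
  obtain ⟨n, hn⟩ := exists_nat_gt (c / (⟪z, u⟫ + χ - r))
  have ht : (0 : ℝ) < n + 1 := by positivity
  have hc : c < (n + 1) * (⟪z, u⟫ + χ - r) := by
    rw [div_lt_iff₀ hδ] at hn
    nlinarith
  refine lt_of_lt_of_le ?_ (inner_add_mul_sub_le_fenchel2 (persp f) u χ ((n + 1 : ℝ) • z, n + 1))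
  rw [persp_smul_self ht, ← hr, ← EReal.coe_mul, ← EReal.coe_sub, EReal.coe_lt_coe_iff,
    real_inner_smul_left]
  linarith

end fenchel

/-- the Fenchel conjugate of the perspective of `f` is the
indicator of `C = {(x,η) : η + f*(x) ≤ 0}`. -/
theorem persp_conj_eq_indicator {H : Type*} [NormedAddCommGroup H]
    [InnerProductSpace ℝ H] (f : H → EReal) (hf : ProperLscConvex f)
    (u : H) (χ : ℝ) :
    fenchel2 (persp f) u χ = if (χ : EReal) + fenchel f u ≤ 0 then 0 else ⊤ := by
  obtain ⟨hbot, hdom, -, -⟩ := hf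
  split_ifs with h <;> rw [EReal.coe_add_nonpos_iff] at h
  · exact fenchel2_persp_eq_zero_of_fenchel_le hbot hdom h
  · exact fenchel2_persp_eq_top_of_lt_fenchel hbot (not_le.1 h)
end

section
/- Let f be a proper lower semicontinuous convex function on a real Hilbert space H, γ > 0, and x ∈ H. If P denotes the metric projection of x onto the closure of dom f, then f(prox_{γf}(x)) ≤ f(P). -/
open scoped RealInnerProductSpace
open Filter Topology

/-! Comparing the prox objective at `p` and at `P` gives
`γ f(p) + ½‖x - p‖² ≤ γ f(P) + ½‖x - P‖²`. The objective is finite on `dom f ≠ ∅`, so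
`f(p) < ∞` and `p ∈ cl (dom f)`; hence the projection `P` is at least as close to `x` as `p`,
and the quadratic terms cancel. -/

theorem EReal.le_of_coe_mul_le_coe_mul {γ : ℝ} (hγ : 0 < γ) {a b : EReal}
    (h : (γ : EReal) * a ≤ γ * b) : a ≤ b := by
  have cancel : ∀ c : EReal, ((γ⁻¹ : ℝ) : EReal) * (γ * c) = c := fun c => by
    rw [← mul_assoc, ← EReal.coe_mul, inv_mul_cancel₀ hγ.ne', EReal.coe_one, one_mul]
  calc a = ((γ⁻¹ : ℝ) : EReal) * (γ * a) := (cancel a).symm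
    _ ≤ ((γ⁻¹ : ℝ) : EReal) * (γ * b) :=
      mul_le_mul_of_nonneg_left h (EReal.coe_nonneg.2 (inv_pos.2 hγ).le)
    _ = b := cancel b

section Prox

variable {H : Type*} [NormedAddCommGroup H] {f : H → EReal} {γ : ℝ} {x p y : H}

theorem IsProx.mem_edom (hγ : 0 < γ) (hp : IsProx f γ x p) (hy : y ∈ edom f) :
    p ∈ edom f := by
  intro hptop
  have hle := hp y
  rw [hptop, EReal.coe_mul_top_of_pos hγ, EReal.top_add_of_ne_bot (EReal.coe_ne_bot _),
    top_le_iff] at hle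
  have hfin : (γ : EReal) * f y ≠ ⊤ :=
    (EReal.mul_ne_top _ _).2 ⟨.inl (EReal.coe_ne_bot γ), .inl (EReal.coe_nonneg.2 hγ.le),
      .inl (EReal.coe_ne_top γ), .inr hy⟩
  exact (EReal.add_lt_top hfin (EReal.coe_ne_top _)).ne hle

theorem IsProx.le_of_norm_sub_le (hγ : 0 < γ) (hp : IsProx f γ x p)
    (hy : ‖x - y‖ ≤ ‖x - p‖) : f p ≤ f y := by
  have hsq : ((‖x - y‖ ^ 2 / 2 : ℝ) : EReal) ≤ ((‖x - p‖ ^ 2 / 2 : ℝ) : EReal) :=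
    EReal.coe_le_coe_iff.2 (by gcongr)
  have hmul : (γ : EReal) * f p ≤ γ * f y :=
    (EReal.addLECancellable_coe _).add_le_add_iff_right.1 ((hp y).trans (add_le_add_right hsq _))
  exact EReal.le_of_coe_mul_le_coe_mul hγ hmul

end Prox

/-- `f(prox_{γ f} x) ≤ f(P_{cl dom f} x)`. -/
theorem f_prox_le_f_proj {H : Type*} [NormedAddCommGroup H] [InnerProductSpace ℝ H]
    (f : H → EReal) (hf : ProperLscConvex f) (γ : ℝ) (hγ : 0 < γ) (x p P : H)
    (hp : IsProx f γ x p) (hP : IsProj (closure (edom f)) x P) :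
    f p ≤ f P := by
  obtain ⟨y, hy⟩ := hf.2.1
  have hp_dom : p ∈ edom f := hp.mem_edom hγ hy
  exact hp.le_of_norm_sub_le hγ (hP.2 p (subset_closure hp_dom))
end

section
/- Let f : H → ℝ be f(x) = ½‖x‖² on a real Hilbert space H, γ > 0, and (x,η) ∈ H × ℝ with η + ‖x‖²/(2γ) > 0 and x ≠ 0. Then there is a unique μ > 0 with μ = η + γ‖x‖²/(2(γ+μ)²), and prox_{γ𝑓̃}(x,η) = ((μ/(γ+μ)) x, μ). -/
open scoped RealInnerProductSpace
open Filter Topology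

/-!
The perspective of `½‖·‖²` is `‖y‖²/(2ν)` for `ν > 0`, vanishes at the origin and is `+∞`
elsewhere. For fixed `ν > 0`, minimizing `γ‖y‖²/(2ν) + ½‖x - y‖²` over `y` gives
`γ‖x‖²/(2(γ+ν))`, attained at `y = (ν/(γ+ν)) x`, and the origin contributes the same formula
at `ν = 0`. What is left is the one-variable function `ν ↦ γ‖x‖²/(2(γ+ν)) + ½(η - ν)²`, convex
on `ν > -γ`, whose critical point is the unique positive solution `μ` of the fixed-point equation.
-/

section Scalar

variable {γ c η : ℝ}

theorem strictMonoOn_sub_div_sq (hc : 0 ≤ c) :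
    StrictMonoOn (fun t => t - c / (2 * (γ + t) ^ 2)) (Set.Ioi (-γ)) := by
  intro a ha b hb hab
  have ha' : 0 < γ + a := by linarith [Set.mem_Ioi.1 ha]
  have hsq : (γ + a) ^ 2 < (γ + b) ^ 2 := by gcongr
  have : c / (2 * (γ + b) ^ 2) ≤ c / (2 * (γ + a) ^ 2) := by gcongr
  dsimp only
  linarith

theorem existsUnique_pos_eq_add_div_sq (hγ : 0 < γ) (hc : 0 ≤ c)
    (h : 0 < η + c / (2 * γ ^ 2)) :
    ∃! μ : ℝ, 0 < μ ∧ μ = η + c / (2 * (γ + μ) ^ 2) := by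
  set g : ℝ → ℝ := fun t => t - c / (2 * (γ + t) ^ 2)
  have hroot : ∀ t, t = η + c / (2 * (γ + t) ^ 2) ↔ g t = η := fun t => by
    simp only [g]
    constructor <;> intro <;> linarith
  have hg0 : g 0 < η := by simp only [g, add_zero]; linarith
  set M := η + c / (2 * γ ^ 2)
  have hgM : η ≤ g M := by
    have : c / (2 * (γ + M) ^ 2) ≤ c / (2 * γ ^ 2) := by gcongr; linarith
    simp only [g]
    linarith
  have hcont : ContinuousOn g (Set.Icc 0 M) := by
    refine continuousOn_id.sub (continuousOn_const.div (by fun_prop) fun t ht => ?_)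
    have := ht.1
    positivity
  obtain ⟨μ, hμM, hgμ⟩ := intermediate_value_Icc h.le hcont ⟨hg0.le, hgM⟩
  have hμ : 0 < μ := hμM.1.lt_of_ne fun h0 => hg0.ne (h0 ▸ hgμ)
  refine ⟨μ, ⟨hμ, (hroot μ).2 hgμ⟩, fun ν ⟨hν, hνfix⟩ => ?_⟩
  refine (strictMonoOn_sub_div_sq (γ := γ) hc).injOn (Set.mem_Ioi.2 (by linarith))
    (Set.mem_Ioi.2 (by linarith)) ?_
  exact ((hroot ν).1 hνfix).trans hgμ.symm

theorem div_add_sq_le_of_eq_add_div_sq {μ ν : ℝ} (hc : 0 ≤ c) (hμ : 0 < γ + μ) (hν : 0 < γ + ν)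
    (hfix : μ = η + c / (2 * (γ + μ) ^ 2)) :
    c / (2 * (γ + μ)) + (η - μ) ^ 2 / 2 ≤ c / (2 * (γ + ν)) + (η - ν) ^ 2 / 2 := by
  -- once `η` is eliminated through `hfix`, the gap is `(μ - ν)²` times a positive factor
  have hη : η = μ - c / (2 * (γ + μ) ^ 2) := by linarith
  subst hη
  have hdiff : (c / (2 * (γ + ν)) + (μ - c / (2 * (γ + μ) ^ 2) - ν) ^ 2 / 2)
      - (c / (2 * (γ + μ)) + (μ - c / (2 * (γ + μ) ^ 2) - μ) ^ 2 / 2)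
      = (μ - ν) ^ 2 * (c / (2 * (γ + ν) * (γ + μ) ^ 2) + 1 / 2) := by
    field_simp
    ring
  have : 0 ≤ (μ - ν) ^ 2 * (c / (2 * (γ + ν) * (γ + μ) ^ 2) + 1 / 2) := by positivity
  linarith

theorem mul_sq_div_le_mul_sq_div_add_sq {ν a b : ℝ} (hγ : 0 ≤ γ) (hν : 0 < ν) :
    γ * a ^ 2 / (2 * (γ + ν)) ≤ γ * (b ^ 2 / (2 * ν)) + (a - b) ^ 2 / 2 := by
  have hγν : 0 < γ + ν := by linarith
  have hdiff : γ * (b ^ 2 / (2 * ν)) + (a - b) ^ 2 / 2 - γ * a ^ 2 / (2 * (γ + ν))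
      = ((γ + ν) * b - ν * a) ^ 2 / (2 * ν * (γ + ν)) := by
    field_simp
    ring
  have : 0 ≤ ((γ + ν) * b - ν * a) ^ 2 / (2 * ν * (γ + ν)) := by positivity
  linarith

end Scalar

section HalfSqNorm

variable {H : Type*} [NormedAddCommGroup H]

theorem recFn_half_sq_norm_zero : recFn (fun z : H => ((‖z‖ ^ 2 / 2 : ℝ) : EReal)) 0 = 0 := by
  simp [recFn]

theorem recFn_half_sq_norm_of_ne_zero [NormedSpace ℝ H] {y : H} (hy : y ≠ 0) :
    recFn (fun z : H => ((‖z‖ ^ 2 / 2 : ℝ) : EReal)) y = ⊤ := by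
  simp only [recFn, ne_eq, EReal.coe_ne_top, not_false_eq_true, iSup_pos]
  refine (EReal.eq_top_iff_forall_lt _).2 fun r => lt_iSup_iff.2 ⟨(r / ‖y‖ ^ 2) • y, ?_⟩
  have hy2 : 0 < ‖y‖ ^ 2 := by positivity
  have hgap : ‖(r / ‖y‖ ^ 2) • y + y‖ ^ 2 / 2 - ‖(r / ‖y‖ ^ 2) • y‖ ^ 2 / 2
      = r + ‖y‖ ^ 2 / 2 := by
    rw [show (r / ‖y‖ ^ 2) • y + y = (r / ‖y‖ ^ 2 + 1) • y by rw [add_smul, one_smul],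
      norm_smul, norm_smul, mul_pow, mul_pow, Real.norm_eq_abs, sq_abs, Real.norm_eq_abs, sq_abs]
    field_simp
    ring
  rw [← EReal.coe_sub, EReal.coe_lt_coe_iff, hgap]
  linarith

theorem persp_half_sq_norm_of_pos [NormedSpace ℝ H] (y : H) {ν : ℝ} (hν : 0 < ν) :
    persp (fun z : H => ((‖z‖ ^ 2 / 2 : ℝ) : EReal)) (y, ν)
      = ((‖y‖ ^ 2 / (2 * ν) : ℝ) : EReal) := by
  simp only [persp, if_pos hν, ← EReal.coe_mul, norm_smul, mul_pow, Real.norm_eq_abs, sq_abs]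
  congr 1
  field_simp

theorem persp_half_sq_norm_zero [NormedSpace ℝ H] :
    persp (fun z : H => ((‖z‖ ^ 2 / 2 : ℝ) : EReal)) (0, 0) = 0 := by
  simp only [persp, lt_irrefl, if_false, if_true]
  exact recFn_half_sq_norm_zero

theorem persp_half_sq_norm_of_ne_zero [NormedSpace ℝ H] {y : H} (hy : y ≠ 0) :
    persp (fun z : H => ((‖z‖ ^ 2 / 2 : ℝ) : EReal)) (y, 0) = ⊤ := by
  simp only [persp, lt_irrefl, if_false, if_true]
  exact recFn_half_sq_norm_of_ne_zero hy

theorem persp_half_sq_norm_of_neg [NormedSpace ℝ H] (y : H) {ν : ℝ} (hν : ν < 0) :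
    persp (fun z : H => ((‖z‖ ^ 2 / 2 : ℝ) : EReal)) (y, ν) = ⊤ := by
  simp only [persp, if_neg hν.not_gt, if_neg hν.ne]

theorem mul_sq_norm_div_le {γ ν : ℝ} (hγ : 0 ≤ γ) (hν : 0 < ν) (x y : H) :
    γ * ‖x‖ ^ 2 / (2 * (γ + ν)) ≤ γ * (‖y‖ ^ 2 / (2 * ν)) + ‖x - y‖ ^ 2 / 2 := by
  have hsq : (‖x‖ - ‖y‖) ^ 2 ≤ ‖x - y‖ ^ 2 :=
    sq_le_sq.2 ((abs_norm_sub_norm_le x y).trans (abs_norm _).ge)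
  linarith [mul_sq_div_le_mul_sq_div_add_sq (a := ‖x‖) (b := ‖y‖) hγ hν]

theorem mul_sq_norm_div_eq [NormedSpace ℝ H] {γ μ : ℝ} (hγ : 0 ≤ γ) (hμ : 0 < μ) (x : H) :
    γ * (‖(μ / (γ + μ)) • x‖ ^ 2 / (2 * μ)) + ‖x - (μ / (γ + μ)) • x‖ ^ 2 / 2
      = γ * ‖x‖ ^ 2 / (2 * (γ + μ)) := by
  have hγμ : 0 < γ + μ := by linarith
  have hsub : x - (μ / (γ + μ)) • x = (γ / (γ + μ)) • x := by
    rw [sub_eq_iff_eq_add, ← add_smul, ← add_div, div_self hγμ.ne', one_smul]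
  rw [hsub, norm_smul, norm_smul, mul_pow, mul_pow, Real.norm_eq_abs, sq_abs, Real.norm_eq_abs,
    sq_abs]
  field_simp
  ring

theorem le_persp_half_sq_norm_objective [NormedSpace ℝ H] {γ η μ : ℝ} (hγ : 0 < γ) (hμ : 0 ≤ μ)
    (x : H) (hfix : μ = η + γ * ‖x‖ ^ 2 / (2 * (γ + μ) ^ 2)) (y : H) (ν : ℝ) :
    ((γ * ‖x‖ ^ 2 / (2 * (γ + μ)) + (η - μ) ^ 2 / 2 : ℝ) : EReal)
      ≤ (γ : EReal) * persp (fun z : H => ((‖z‖ ^ 2 / 2 : ℝ) : EReal)) (y, ν)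
        + (((‖x - y‖ ^ 2 + (η - ν) ^ 2) / 2 : ℝ) : EReal) := by
  have hc : 0 ≤ γ * ‖x‖ ^ 2 := by positivity
  have hγμ : 0 < γ + μ := by linarith
  have htop : ∀ r : ℝ, (γ : EReal) * ⊤ + r = ⊤ := fun r => by
    rw [EReal.mul_top_of_pos (EReal.coe_pos.2 hγ), EReal.top_add_coe]
  rcases lt_trichotomy ν 0 with hν | rfl | hν
  · rw [persp_half_sq_norm_of_neg y hν, htop]
    exact le_top
  · obtain rfl | hy := eq_or_ne y 0
    · have hmin := div_add_sq_le_of_eq_add_div_sq (ν := 0) hc hγμ (by simpa) hfix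
      have h0 : γ * ‖x‖ ^ 2 / (2 * (γ + 0)) = ‖x‖ ^ 2 / 2 := by
        rw [add_zero]
        field_simp
      rw [persp_half_sq_norm_zero, mul_zero, zero_add, EReal.coe_le_coe_iff, sub_zero]
      linarith
    · rw [persp_half_sq_norm_of_ne_zero hy, htop]
      exact le_top
  · have hmin := div_add_sq_le_of_eq_add_div_sq hc hγμ (by linarith) hfix
    have henv := mul_sq_norm_div_le hγ.le hν x y
    rw [persp_half_sq_norm_of_pos y hν, ← EReal.coe_mul, ← EReal.coe_add, EReal.coe_le_coe_iff]
    linarith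

end HalfSqNorm

theorem prox_persp_sq_of_pos_general {H : Type*} [NormedAddCommGroup H]
    [InnerProductSpace ℝ H] (γ : ℝ) (hγ : 0 < γ) (x : H) (η : ℝ)
    (hpos : 0 < η + ‖x‖ ^ 2 / (2 * γ)) :
    (∃! μ : ℝ, 0 < μ ∧ μ = η + γ * ‖x‖ ^ 2 / (2 * (γ + μ) ^ 2)) ∧
    ∀ μ : ℝ, 0 < μ → μ = η + γ * ‖x‖ ^ 2 / (2 * (γ + μ) ^ 2) →
      IsProx2 (persp fun y : H => ((‖y‖ ^ 2 / 2 : ℝ) : EReal)) γ x η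
        ((μ / (γ + μ)) • x) μ := by
  have hpos' : 0 < η + γ * ‖x‖ ^ 2 / (2 * γ ^ 2) := by
    convert hpos using 2
    field_simp
  refine ⟨existsUnique_pos_eq_add_div_sq hγ (by positivity) hpos', fun μ hμ hfix y ν => ?_⟩
  have hvalue :
      (γ : EReal) * persp (fun z : H => ((‖z‖ ^ 2 / 2 : ℝ) : EReal)) ((μ / (γ + μ)) • x, μ)
        + (((‖x - (μ / (γ + μ)) • x‖ ^ 2 + (η - μ) ^ 2) / 2 : ℝ) : EReal)
        = ((γ * ‖x‖ ^ 2 / (2 * (γ + μ)) + (η - μ) ^ 2 / 2 : ℝ) : EReal) := by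
    rw [persp_half_sq_norm_of_pos _ hμ, ← EReal.coe_mul, ← EReal.coe_add, EReal.coe_eq_coe_iff,
      ← mul_sq_norm_div_eq hγ.le hμ x]
    ring
  rw [hvalue]
  exact le_persp_half_sq_norm_objective hγ hμ.le x hfix y ν

/-- for `f = ½‖·‖²`, if `η + ‖x‖²/(2γ) > 0` and `x ≠ 0`, there
is a unique `μ > 0` with `μ = η + γ‖x‖²/(2(γ+μ)²)`, and
`prox_{γ f̃}(x,η) = ((μ/(γ+μ)) x, μ)`. -/
theorem prox_persp_sq_of_pos {H : Type*} [NormedAddCommGroup H]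
    [InnerProductSpace ℝ H] (γ : ℝ) (hγ : 0 < γ) (x : H) (η : ℝ)
    (hx : x ≠ 0) (hpos : 0 < η + ‖x‖ ^ 2 / (2 * γ)) :
    (∃! μ : ℝ, 0 < μ ∧ μ = η + γ * ‖x‖ ^ 2 / (2 * (γ + μ) ^ 2)) ∧
    ∀ μ : ℝ, 0 < μ → μ = η + γ * ‖x‖ ^ 2 / (2 * (γ + μ) ^ 2) →
      IsProx2 (persp fun y : H => ((‖y‖ ^ 2 / 2 : ℝ) : EReal)) γ x η
        ((μ / (γ + μ)) • x) μ :=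
  prox_persp_sq_of_pos_general γ hγ x η hpos
end

section
/- Let f : H → ℝ be f(x) = ½‖x‖² on a real Hilbert space H, γ > 0, and (x,η) ∈ H × ℝ with η + ‖x‖²/(2γ) ≤ 0. Then prox_{γ𝑓̃}(x,η) = (0,0). -/
open scoped RealInnerProductSpace
open Filter Topology

/-!
The perspective `f̃` of `½‖·‖²` is the support function of `{(u, χ) | χ + ½‖u‖² ≤ 0}`, so it
dominates every linear functional `(y, ν) ↦ ⟪u, y⟫ + χν` with `χ + ½‖u‖² ≤ 0`. The hypothesis puts
`(x, η)/γ` in that set, making it a subgradient of `f̃` at the origin, which is the optimality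
condition for `prox_{γf̃}(x, η) = (0, 0)`.
-/

theorem isProx2_of_subgradient {H : Type*} [NormedAddCommGroup H] [InnerProductSpace ℝ H]
    {F : H × ℝ → EReal} {γ : ℝ} {x : H} {η : ℝ} {p : H} {μ : ℝ}
    (hF : ∀ (y : H) (ν : ℝ), (γ : EReal) * F (p, μ)
      + ((⟪x - p, y - p⟫ + (η - μ) * (ν - μ) : ℝ) : EReal) ≤ (γ : EReal) * F (y, ν)) :
    IsProx2 F γ x η p μ := by
  intro y ν
  have hquad : (‖x - p‖ ^ 2 + (η - μ) ^ 2) / 2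
      ≤ (⟪x - p, y - p⟫ + (η - μ) * (ν - μ)) + (‖x - y‖ ^ 2 + (η - ν) ^ 2) / 2 := by
    -- expanding `‖x - y‖²` around `p` leaves the nonnegative term `½‖(y - p, ν - μ)‖²`
    have hxy : x - y = (x - p) - (y - p) := by abel
    rw [hxy, norm_sub_sq_real (x - p) (y - p)]
    nlinarith [sq_nonneg ‖y - p‖, sq_nonneg (ν - μ)]
  calc (γ : EReal) * F (p, μ) + (((‖x - p‖ ^ 2 + (η - μ) ^ 2) / 2 : ℝ) : EReal)
      ≤ (γ : EReal) * F (p, μ) + ((⟪x - p, y - p⟫ + (η - μ) * (ν - μ) : ℝ) : EReal)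
        + (((‖x - y‖ ^ 2 + (η - ν) ^ 2) / 2 : ℝ) : EReal) := by
        rw [add_assoc, ← EReal.coe_add]
        gcongr
    _ ≤ _ := by gcongr; exact hF y ν

section Perspective

variable {E : Type*} [AddCommGroup E] {f : E → EReal}

variable [Module ℝ E]

theorem persp_zero (hbot : ∀ x, f x ≠ ⊥) (hdom : ∃ x, f x ≠ ⊤) : persp f (0, 0) = 0 := by
  simp [persp, recFn_zero hbot hdom]

theorem persp_of_neg_s12 {y : E} {ν : ℝ} (hν : ν < 0) : persp f (y, ν) = ⊤ := by
  simp [persp, hν.not_gt, hν.ne]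

end Perspective

section SquaredNorm

variable {H : Type*} [NormedAddCommGroup H] [InnerProductSpace ℝ H]

theorem recFn_sq_norm_of_ne_zero {y : H} (hy : y ≠ 0) :
    recFn (fun z : H => ((‖z‖ ^ 2 / 2 : ℝ) : EReal)) y = ⊤ := by
  refine (EReal.eq_top_iff_forall_lt _).2 fun r => ?_
  have hy2 : 0 < ‖y‖ ^ 2 := by positivity
  set z := ((r + 1) / ‖y‖ ^ 2) • y
  have hinc : ((‖z + y‖ ^ 2 / 2 : ℝ) : EReal) - ((‖z‖ ^ 2 / 2 : ℝ) : EReal)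
      = ((r + 1 + ‖y‖ ^ 2 / 2 : ℝ) : EReal) := by
    rw [← EReal.coe_sub, norm_add_sq_real, real_inner_smul_left, real_inner_self_eq_norm_sq]
    congr 1
    field_simp
    ring
  calc (r : EReal) < ((r + 1 + ‖y‖ ^ 2 / 2 : ℝ) : EReal) := by exact_mod_cast (by linarith)
    _ = _ := hinc.symm
    _ ≤ _ := le_iSup₂_of_le z (EReal.coe_ne_top _) le_rfl

theorem persp_sq_norm_of_pos {y : H} {ν : ℝ} (hν : 0 < ν) :
    persp (fun z : H => ((‖z‖ ^ 2 / 2 : ℝ) : EReal)) (y, ν)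
      = ((‖y‖ ^ 2 / (2 * ν) : ℝ) : EReal) := by
  simp only [persp, if_pos hν, ← EReal.coe_mul, norm_smul, Real.norm_eq_abs, mul_pow, sq_abs]
  congr 1
  field_simp

theorem inner_add_mul_le_persp_sq_norm {u : H} {χ : ℝ} (hχ : χ + ‖u‖ ^ 2 / 2 ≤ 0)
    (y : H) (ν : ℝ) :
    ((⟪u, y⟫ + χ * ν : ℝ) : EReal) ≤ persp (fun z : H => ((‖z‖ ^ 2 / 2 : ℝ) : EReal)) (y, ν) := by
  rcases lt_trichotomy ν 0 with hν | rfl | hν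
  · simp [persp_of_neg_s12 hν]
  · rcases eq_or_ne y 0 with rfl | hy
    · simp [persp_zero]
    · simp [persp, recFn_sq_norm_of_ne_zero hy]
  · rw [persp_sq_norm_of_pos hν, EReal.coe_le_coe_iff]
    -- by Cauchy–Schwarz the gap is at least `(‖y‖ - ν‖u‖)² / (2ν)`
    have hcs : ⟪u, y⟫ ≤ ‖u‖ * ‖y‖ := real_inner_le_norm u y
    have hsq : ‖y‖ ^ 2 / (2 * ν)
        = (‖y‖ - ν * ‖u‖) ^ 2 / (2 * ν) + ‖u‖ * ‖y‖ - ν * ‖u‖ ^ 2 / 2 := by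
      field_simp
      ring
    have hgap : 0 ≤ (‖y‖ - ν * ‖u‖) ^ 2 / (2 * ν) := by positivity
    nlinarith [mul_le_mul_of_nonneg_right hχ hν.le]

end SquaredNorm

/-- for `f = ½‖·‖²`, if `η + ‖x‖²/(2γ) ≤ 0` then
`prox_{γ f̃}(x,η) = (0,0)`. -/
theorem prox_persp_sq_of_nonpos {H : Type*} [NormedAddCommGroup H]
    [InnerProductSpace ℝ H] (γ : ℝ) (hγ : 0 < γ) (x : H) (η : ℝ)
    (hle : η + ‖x‖ ^ 2 / (2 * γ) ≤ 0) :
    IsProx2 (persp fun y : H => ((‖y‖ ^ 2 / 2 : ℝ) : EReal)) γ x η 0 0 := by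
  refine isProx2_of_subgradient fun y ν => ?_
  have hχ : η / γ + ‖γ⁻¹ • x‖ ^ 2 / 2 ≤ 0 := by
    have hscale : η / γ + ‖γ⁻¹ • x‖ ^ 2 / 2 = (η + ‖x‖ ^ 2 / (2 * γ)) / γ := by
      rw [norm_smul, mul_pow, norm_inv, Real.norm_of_nonneg hγ.le]
      field_simp
    rw [hscale]
    exact div_nonpos_of_nonpos_of_nonneg hle hγ.le
  have hlin : ⟪x - 0, y - 0⟫ + (η - 0) * (ν - 0) = γ * (⟪γ⁻¹ • x, y⟫ + η / γ * ν) := by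
    simp only [sub_zero, real_inner_smul_left]
    field_simp
  rw [persp_zero (by simp) ⟨0, by simp⟩, mul_zero, zero_add, hlin, EReal.coe_mul]
  exact mul_le_mul_of_nonneg_left (inner_add_mul_le_persp_sq_norm hχ y ν)
    (by exact_mod_cast hγ.le)
end

section
/- Let φ : ℝ → ]-∞,+∞] with φ(ξ) = ξ ln ξ for ξ > 0, φ(0) = 0, φ(ξ) = +∞ for ξ < 0, and let τ > 0 and y ∈ ℝ. Then prox_{τφ}(y) = τ · W₀((1/τ) e^{y/τ − 1}), where W₀ is the principal branch of the Lambert W function (the inverse of w ↦ w e^w on [0,∞)). Equivalently, p = prox_{τφ}(y) is the unique p > 0 satisfying y − p = τ(ln p + 1). -/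
open scoped RealInnerProductSpace
open Filter Topology

/-- Boltzmann–Shannon entropy: `ξ ln ξ` for `ξ > 0`, `0` at `0`, `+∞` for `ξ < 0`. -/
noncomputable def ent : ℝ → EReal := fun ξ =>
  if 0 < ξ then ((ξ * Real.log ξ : ℝ) : EReal) else if ξ = 0 then 0 else ⊤

/-
The objective `z ↦ τ φ(z) + ½ (y - z)²` is finite exactly on `[0, ∞)`. If `q > 0` solves the
optimality condition `y - q = τ (ln q + 1)`, the tangent-line inequality
`z ln z ≥ z ln q + z - q` for the convex function `z ln z` makes the objective grow at least like
`½ (z - q)²` away from `q`; so `q` is a minimizer and every minimizer equals `q`. The substitution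
`q = τ w` turns the optimality condition into `w e^w = (1/τ) e^{y/τ - 1}`, which has a solution
`w ≥ 0` by the intermediate value theorem and at most one since `w ↦ w e^w` is strictly increasing
on `[0, ∞)`.
-/

open Real

lemma exists_mul_exp_eq {t : ℝ} (ht : 0 ≤ t) : ∃ w, 0 ≤ w ∧ w * exp w = t := by
  have hcont : ContinuousOn (fun w => w * exp w) (Set.Icc 0 t) := by fun_prop
  have ht_le : t ≤ t * exp t := le_mul_of_one_le_right ht (one_le_exp ht)
  obtain ⟨w, hw, hwt⟩ := intermediate_value_Icc ht hcont ⟨by simpa using ht, ht_le⟩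
  exact ⟨w, hw.1, hwt⟩

lemma strictMonoOn_mul_exp : StrictMonoOn (fun w => w * exp w) (Set.Ici 0) := by
  intro a ha b _ hab
  exact mul_lt_mul hab (exp_le_exp.mpr hab.le) (exp_pos a) (ha.out.trans hab.le)

lemma mul_log_tangent_le {q z : ℝ} (hq : 0 < q) (hz : 0 ≤ z) :
    z * log q + (z - q) ≤ z * log z := by
  rcases hz.eq_or_lt with rfl | hz
  · simpa using hq.le
  · have h := mul_le_mul_of_nonneg_left (log_le_sub_one_of_pos (div_pos hq hz)) hz.le
    rw [log_div hq.ne' hz.ne', mul_sub, mul_sub, mul_div_cancel₀ _ hz.ne'] at h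
    linarith

lemma sub_eq_mul_log_add_one_iff {τ y q : ℝ} (hτ : 0 < τ) (hq : 0 < q) :
    y - q = τ * (log q + 1) ↔ q / τ * exp (q / τ) = 1 / τ * exp (y / τ - 1) := by
  have hlhs : q / τ * exp (q / τ) = 1 / τ * exp (log q + q / τ) := by
    rw [exp_add, exp_log hq]; ring
  rw [hlhs, mul_right_inj' (one_div_ne_zero hτ.ne'), exp_eq_exp]
  constructor <;> intro h
  · field_simp; linarith
  · field_simp at h; linarith

noncomputable def entProxObjective (τ y z : ℝ) : ℝ := τ * (z * log z) + (y - z) ^ 2 / 2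

lemma entProxObjective_add_sq_le {τ y q z : ℝ} (hτ : 0 ≤ τ) (hq : 0 < q)
    (hroot : y - q = τ * (log q + 1)) (hz : 0 ≤ z) :
    entProxObjective τ y q + (z - q) ^ 2 / 2 ≤ entProxObjective τ y z := by
  have htangent := mul_le_mul_of_nonneg_left (mul_log_tangent_le hq hz) hτ
  unfold entProxObjective
  linear_combination htangent + (z - q) * hroot

lemma coe_mul_ent_add_of_nonneg (τ y : ℝ) {z : ℝ} (hz : 0 ≤ z) :
    (τ : EReal) * ent z + ((‖y - z‖ ^ 2 / 2 : ℝ) : EReal) = entProxObjective τ y z := by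
  have hent : ent z = ((z * log z : ℝ) : EReal) := by
    rcases hz.eq_or_lt with rfl | hz <;> simp [ent, *]
  rw [hent, entProxObjective, Real.norm_eq_abs, sq_abs]
  norm_cast

lemma coe_mul_ent_add_of_neg {τ : ℝ} (hτ : 0 < τ) (y : ℝ) {z : ℝ} (hz : z < 0) :
    (τ : EReal) * ent z + ((‖y - z‖ ^ 2 / 2 : ℝ) : EReal) = ⊤ := by
  have hent : ent z = ⊤ := by simp [ent, hz.ne, hz.not_gt]
  rw [hent, EReal.mul_top_of_pos (by exact_mod_cast hτ), EReal.top_add_coe]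

lemma isProx_ent_iff {τ y p : ℝ} (hτ : 0 < τ) :
    IsProx ent τ y p ↔ 0 ≤ p ∧ ∀ z, 0 ≤ z → entProxObjective τ y p ≤ entProxObjective τ y z := by
  constructor
  · intro h
    have hp : 0 ≤ p := by
      by_contra! hp
      have h0 := h 0
      rw [coe_mul_ent_add_of_neg hτ y hp, coe_mul_ent_add_of_nonneg τ y le_rfl, top_le_iff] at h0
      exact EReal.coe_ne_top _ h0
    refine ⟨hp, fun z hz => ?_⟩
    have hz' := h z
    rwa [coe_mul_ent_add_of_nonneg τ y hp, coe_mul_ent_add_of_nonneg τ y hz,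
      EReal.coe_le_coe_iff] at hz'
  · rintro ⟨hp, hmin⟩ z
    rw [coe_mul_ent_add_of_nonneg τ y hp]
    rcases lt_or_ge z 0 with hz | hz
    · rw [coe_mul_ent_add_of_neg hτ y hz]
      exact le_top
    · rw [coe_mul_ent_add_of_nonneg τ y hz]
      exact EReal.coe_le_coe (hmin z hz)

lemma isProx_ent_of_sub_eq {τ y q : ℝ} (hτ : 0 < τ) (hq : 0 < q)
    (hroot : y - q = τ * (log q + 1)) : IsProx ent τ y q :=
  (isProx_ent_iff hτ).mpr ⟨hq.le, fun z hz => by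
    linarith [entProxObjective_add_sq_le hτ.le hq hroot hz, sq_nonneg (z - q)]⟩

lemma eq_of_isProx_ent {τ y p q : ℝ} (hτ : 0 < τ) (hp : IsProx ent τ y p) (hq : 0 < q)
    (hroot : y - q = τ * (log q + 1)) : p = q := by
  obtain ⟨hp0, hmin⟩ := (isProx_ent_iff hτ).mp hp
  have hgrowth := entProxObjective_add_sq_le hτ.le hq hroot hp0
  have hsq : (p - q) ^ 2 = 0 := le_antisymm (by linarith [hmin q hq.le]) (sq_nonneg _)
  exact sub_eq_zero.mp (pow_eq_zero_iff two_ne_zero |>.mp hsq)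

/-- `prox_{τφ}(y) = τ W₀((1/τ) e^{y/τ - 1})` where `W₀(t)` is the
unique `w ≥ 0` with `w e^w = t`; equivalently `p = prox_{τφ}(y)` is the unique
`p > 0` with `y - p = τ(ln p + 1)`. -/
theorem prox_entropy (τ y : ℝ) (hτ : 0 < τ) :
    (∃! p : ℝ, IsProx ent τ y p) ∧
    (∀ p : ℝ, IsProx ent τ y p →
      (0 < p ∧ y - p = τ * (Real.log p + 1)) ∧
      ∀ w : ℝ, 0 ≤ w → w * Real.exp w = (1 / τ) * Real.exp (y / τ - 1) →
        p = τ * w) ∧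
    (∀ q : ℝ, 0 < q → y - q = τ * (Real.log q + 1) → IsProx ent τ y q) := by
  set t := 1 / τ * exp (y / τ - 1)
  have ht : 0 < t := by positivity
  obtain ⟨w, hw0, hwt⟩ := exists_mul_exp_eq ht.le
  have hw : 0 < w := hw0.lt_of_ne (by rintro rfl; simp [← hwt] at ht)
  have hq : 0 < τ * w := mul_pos hτ hw
  have hroot : y - τ * w = τ * (log (τ * w) + 1) := by
    rw [sub_eq_mul_log_add_one_iff hτ hq, mul_div_cancel_left₀ w hτ.ne']
    exact hwt
  have hunique : ∀ p, IsProx ent τ y p → p = τ * w := fun p hp => eq_of_isProx_ent hτ hp hq hroot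
  refine ⟨⟨τ * w, isProx_ent_of_sub_eq hτ hq hroot, hunique⟩, fun p hp => ?_,
    fun q hq hroot => isProx_ent_of_sub_eq hτ hq hroot⟩
  rw [hunique p hp]
  refine ⟨⟨hq, hroot⟩, fun w' hw' hw't => ?_⟩
  rw [strictMonoOn_mul_exp.injOn hw0 hw' (hwt.trans hw't.symm)]
end
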